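/- For integers d ≥ 0 and k ≥ 1, every finite graph G with maximum average degree less than (2d+2)/(d+2) · k is k-choosable with defect d. -/

import Mathlib

/-- The monochromatic subgraph of `G` under colouring `φ`. -/
def SimpleGraph.monoSub {V : Type*} (G : SimpleGraph V) (φ : V → ℕ) : SimpleGraph V where
  Adj u v := G.Adj u v ∧ φ u = φ v
  symm := ⟨fun u v h => ⟨h.1.symm, h.2.symm⟩⟩
  loopless := ⟨fun v h => h.1.ne rfl⟩

/-- The colouring `φ` has defect at most `d`: every vertex has at most `d`
neighbours of its own colour. -/
def SimpleGraph.DefectLe {V : Type*} (G : SimpleGraph V) (φ : V → ℕ) (d : ℕ) : Prop :=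
  ∀ v : V, {w : V | G.Adj v w ∧ φ w = φ v}.ncard ≤ d

/-- The colouring `φ` has clustering at most `c`: every connected component of
the monochromatic subgraph has at most `c` vertices. -/
def SimpleGraph.ClusterLe {V : Type*} (G : SimpleGraph V) (φ : V → ℕ) (c : ℕ) : Prop :=
  ∀ v : V, {w : V | (G.monoSub φ).Reachable v w}.ncard ≤ c

/-- Twice the number of edges of `G` inside the vertex set `s`
(the number of ordered adjacent pairs in `s`). -/
noncomputable def SimpleGraph.degPairs {V : Type*} (G : SimpleGraph V) (s : Finset V) : ℕ :=
  {p : V × V | p.1 ∈ s ∧ p.2 ∈ s ∧ G.Adj p.1 p.2}.ncard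

/-!
A colouring from lists `L'` of a vertex set `X` in which every `u` has fewer than `(d+1)|L' u|`
neighbours in `X` exists with defect `d` (Lovász): among all such colourings take one with the
fewest monochromatic edges; a vertex with more than `d` like-coloured neighbours could be recoloured
with a colour of its list that it sees at most `d` times, losing monochromatic edges.

For the theorem, colour a vertex set `A` by induction on `|A|`. Since
`(d+2)·2e(A) < 2k(d+1)|A|`, a smallest `X ⊆ A` with positive potential
`k(d+1)|X| - (d+2)e(X) - (d+1)e(X, A ∖ X)` is nonempty, and removing any `u ∈ X` makes the potential
nonpositive, i.e. `(d+1)·deg_{A∖X} u + deg_X u < k(d+1)`. Colour `A ∖ X` by induction and delete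
from the list of each `u ∈ X` the colours of its neighbours in `A ∖ X`: the shortened lists still
satisfy Lovász's condition on `X`, and no edge between `X` and `A ∖ X` is monochromatic.
-/

open Finset

theorem Finset.sum_sum_eq_two_nsmul_add_sum_sum_erase {α M : Type*} [DecidableEq α]
    [AddCommMonoid M] {f : α → α → M} (hf : ∀ x y, f x y = f y x) {s : Finset α} {a : α}
    (ha : a ∈ s) (hfa : f a a = 0) :
    ∑ x ∈ s, ∑ y ∈ s, f x y = 2 • ∑ y ∈ s, f a y + ∑ x ∈ s.erase a, ∑ y ∈ s.erase a, f x y := by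
  have hcol : ∑ x ∈ s.erase a, f x a = ∑ y ∈ s, f a y := by
    simp_rw [hf _ a]
    exact sum_erase s hfa
  calc ∑ x ∈ s, ∑ y ∈ s, f x y
      = ∑ y ∈ s, f a y + ∑ x ∈ s.erase a, (f x a + ∑ y ∈ s.erase a, f x y) := by
        rw [← add_sum_erase s _ ha]
        exact congrArg _ (sum_congr rfl fun x _ => (add_sum_erase s _ ha).symm)
    _ = _ := by rw [sum_add_distrib, hcol, two_nsmul, add_assoc]

namespace SimpleGraph

variable {V : Type*} (G : SimpleGraph V) [DecidableRel G.Adj]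

def degWithin (s : Finset V) (v : V) : ℕ := #{w ∈ s | G.Adj v w}

instance (φ : V → ℕ) : DecidableRel (G.monoSub φ).Adj :=
  fun v w => inferInstanceAs (Decidable (G.Adj v w ∧ φ v = φ w))

theorem degWithin_sdiff_add_degWithin [DecidableEq V] {s t : Finset V} (h : t ⊆ s) (v : V) :
    G.degWithin (s \ t) v + G.degWithin t v = G.degWithin s v := by
  simp only [degWithin, card_filter]
  exact sum_sdiff h

theorem degWithin_le_degWithin {H : SimpleGraph V} [DecidableRel H.Adj] {s t : Finset V} {v : V}
    (h : ∀ w ∈ s, G.Adj v w → w ∈ t ∧ H.Adj v w) : G.degWithin s v ≤ H.degWithin t v := by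
  refine card_le_card fun w hw => ?_
  rw [mem_filter] at hw ⊢
  exact h w hw.1 hw.2

theorem degWithin_congr {H : SimpleGraph V} [DecidableRel H.Adj] {s : Finset V} {v : V}
    (h : ∀ w ∈ s, G.Adj v w ↔ H.Adj v w) : G.degWithin s v = H.degWithin s v :=
  congrArg card (filter_congr h)

theorem sum_degWithin_eq_two_mul_add [DecidableEq V] {s : Finset V} {u : V} (hu : u ∈ s) :
    ∑ v ∈ s, G.degWithin s v =
      2 * G.degWithin s u + ∑ v ∈ s.erase u, G.degWithin (s.erase u) v := by
  simp only [degWithin, card_filter]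
  exact sum_sum_eq_two_nsmul_add_sum_sum_erase (fun v w => by simp only [G.adj_comm]) hu
    (by simp)

theorem degPairs_eq_sum_degWithin (s : Finset V) :
    G.degPairs s = ∑ v ∈ s, G.degWithin s v := by
  have : {p : V × V | p.1 ∈ s ∧ p.2 ∈ s ∧ G.Adj p.1 p.2} = ↑{p ∈ s ×ˢ s | G.Adj p.1 p.2} := by
    ext; simp [and_assoc]
  rw [degPairs, this, Set.ncard_coe_finset, card_filter, sum_product]
  simp only [degWithin, card_filter]

theorem exists_subset_forall_degWithin_lt [DecidableEq V] {A : Finset V} {k d : ℕ}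
    (hA : (d + 2) * ∑ v ∈ A, G.degWithin A v < 2 * k * (d + 1) * #A) :
    ∃ X ⊆ A, X.Nonempty ∧
      ∀ u ∈ X, (d + 1) * G.degWithin (A \ X) u + G.degWithin X u < k * (d + 1) := by
  -- `P Y = 2 (k (d+1) |Y| - (d+2) e(Y) - (d+1) e(Y, A \ Y))`, using `deg_A = deg_Y + deg_{A \ Y}`
  let P : Finset V → ℤ := fun Y =>
    2 * (d + 1) * (k * #Y - ∑ v ∈ Y, (G.degWithin A v : ℤ)) + d * ∑ v ∈ Y, (G.degWithin Y v : ℤ)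
  have hP_erase : ∀ Y, ∀ u ∈ Y, P Y =
      P (Y.erase u) + 2 * ((d + 1) * (k - G.degWithin A u) + d * G.degWithin Y u) := by
    intro Y u hu
    have hsum := G.sum_degWithin_eq_two_mul_add hu
    simp only [P]
    rw [← add_sum_erase Y _ hu, ← card_erase_add_one hu, ← Nat.cast_sum, ← Nat.cast_sum, hsum]
    push_cast
    ring
  have hPA : 0 < P A := by
    have hA' : ((d + 2) * ∑ v ∈ A, G.degWithin A v : ℤ) < 2 * k * (d + 1) * #A := by
      exact_mod_cast hA
    simp only [P]
    linarith
  obtain ⟨X, hX, hmin⟩ := exists_min_image {Y ∈ A.powerset | 0 < P Y} card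
    ⟨A, mem_filter.2 ⟨mem_powerset_self A, hPA⟩⟩
  rw [mem_filter, mem_powerset] at hX
  obtain ⟨hXA, hPX⟩ := hX
  refine ⟨X, hXA, nonempty_iff_ne_empty.2 ?_, fun u hu => ?_⟩
  · rintro rfl
    simp [P] at hPX
  have hPX' : P (X.erase u) ≤ 0 := by
    by_contra! h
    have := hmin (X.erase u) (mem_filter.2 ⟨mem_powerset.2 ((erase_subset u X).trans hXA), h⟩)
    exact (card_erase_lt_of_mem hu).not_ge this
  have hdeg := G.degWithin_sdiff_add_degWithin hXA u
  rw [hP_erase X u hu] at hPX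
  zify at hdeg ⊢
  rw [← hdeg] at hPX
  linarith

theorem exists_defective_listColoring_of_degWithin_lt [DecidableEq V] {X : Finset V}
    {L : V → Finset ℕ} {d : ℕ} (hL : ∀ u ∈ X, G.degWithin X u < #(L u) * (d + 1)) :
    ∃ φ : V → ℕ, (∀ u ∈ X, φ u ∈ L u) ∧ ∀ u ∈ X, (G.monoSub φ).degWithin X u ≤ d := by
  have hne : ∀ u, ∃ c, u ∈ X → c ∈ L u := fun u => by
    by_cases hu : u ∈ X
    · obtain ⟨c, hc⟩ := card_pos.1 (Nat.pos_of_mul_pos_right ((Nat.zero_le _).trans_lt (hL u hu)))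
      exact ⟨c, fun _ => hc⟩
    · exact ⟨0, fun h => absurd h hu⟩
  choose φ₀ hφ₀ using hne
  obtain ⟨φ, hφL, hmin⟩ := (measure fun φ => ∑ v ∈ X, (G.monoSub φ).degWithin X v).wf.has_min
    {φ | ∀ u ∈ X, φ u ∈ L u} ⟨φ₀, hφ₀⟩
  refine ⟨φ, hφL, fun u hu => ?_⟩
  by_contra! hbad
  obtain ⟨c, hc, hfew⟩ := exists_card_fiber_lt_of_card_lt_mul (f := φ) (hL u hu)
  set φ' := Function.update φ u c
  have hφ'L : ∀ w ∈ X, φ' w ∈ L w := fun w hw => by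
    by_cases hwu : w = u
    · subst hwu; simpa [φ'] using hc
    · simpa [φ', Function.update_of_ne hwu] using hφL w hw
  have hu' : (G.monoSub φ').degWithin X u ≤ d := by
    refine Nat.lt_succ_iff.1 ((le_of_eq ?_).trans_lt hfew)
    rw [degWithin, filter_filter]
    refine congrArg card (filter_congr fun w _ => ?_)
    refine and_congr_right fun h => ?_
    simp only [φ', Function.update_self, Function.update_of_ne (G.ne_of_adj h).symm, eq_comm]
  have hrest : ∑ v ∈ X.erase u, (G.monoSub φ').degWithin (X.erase u) v =
      ∑ v ∈ X.erase u, (G.monoSub φ).degWithin (X.erase u) v :=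
    sum_congr rfl fun v hv => degWithin_congr _ fun w hw => by
      simp [monoSub, φ', Function.update_of_ne (ne_of_mem_erase hv),
        Function.update_of_ne (ne_of_mem_erase hw)]
  refine hmin φ' hφ'L ?_
  show ∑ v ∈ X, (G.monoSub φ').degWithin X v < ∑ v ∈ X, (G.monoSub φ).degWithin X v
  rw [sum_degWithin_eq_two_mul_add _ hu, sum_degWithin_eq_two_mul_add _ hu, hrest]
  omega

theorem degWithin_monoSub_piecewise_le [DecidableEq V] {A X : Finset V} {χ ψ : V → ℕ} {d : ℕ}
    (hχ : ∀ v ∈ X, (G.monoSub χ).degWithin X v ≤ d)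
    (hψ : ∀ v ∈ A \ X, (G.monoSub ψ).degWithin (A \ X) v ≤ d)
    (hsep : ∀ u ∈ X, ∀ w ∈ A \ X, G.Adj u w → χ u ≠ ψ w) :
    ∀ v ∈ A, (G.monoSub (X.piecewise χ ψ)).degWithin A v ≤ d := by
  intro v hv
  by_cases hvX : v ∈ X
  · refine le_trans (degWithin_le_degWithin _ fun w hw ⟨hvw, hc⟩ => ?_) (hχ v hvX)
    rw [piecewise_eq_of_mem _ _ _ hvX] at hc
    by_cases hwX : w ∈ X
    · rw [piecewise_eq_of_mem _ _ _ hwX] at hc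
      exact ⟨hwX, hvw, hc⟩
    · rw [piecewise_eq_of_notMem _ _ _ hwX] at hc
      exact absurd hc (hsep v hvX w (mem_sdiff.2 ⟨hw, hwX⟩) hvw)
  · have hvAX := mem_sdiff.2 ⟨hv, hvX⟩
    refine le_trans (degWithin_le_degWithin _ fun w hw ⟨hvw, hc⟩ => ?_) (hψ v hvAX)
    rw [piecewise_eq_of_notMem _ _ _ hvX] at hc
    by_cases hwX : w ∈ X
    · rw [piecewise_eq_of_mem _ _ _ hwX] at hc
      exact absurd hc.symm (hsep w hwX v hvAX hvw.symm)
    · rw [piecewise_eq_of_notMem _ _ _ hwX] at hc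
      exact ⟨mem_sdiff.2 ⟨hw, hwX⟩, hvw, hc⟩

theorem exists_defective_listColoring_of_sum_degWithin_lt [DecidableEq V]
    {k d : ℕ} {L : V → Finset ℕ} (hL : ∀ v, k ≤ #(L v))
    (hdens : ∀ s : Finset V, s.Nonempty →
      (d + 2) * ∑ v ∈ s, G.degWithin s v < 2 * k * (d + 1) * #s)
    (A : Finset V) :
    ∃ φ : V → ℕ, (∀ v ∈ A, φ v ∈ L v) ∧ ∀ v ∈ A, (G.monoSub φ).degWithin A v ≤ d := by
  induction A using Finset.strongInduction with
  | H A ih =>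
  rcases A.eq_empty_or_nonempty with rfl | hA
  · exact ⟨fun _ => 0, by simp, by simp⟩
  obtain ⟨X, hXA, hX, hlight⟩ := G.exists_subset_forall_degWithin_lt (hdens A hA)
  obtain ⟨ψ, hψL, hψd⟩ := ih (A \ X) (sdiff_ssubset hXA hX)
  let L' u := L u \ image ψ {w ∈ A \ X | G.Adj u w}
  have hL' : ∀ u ∈ X, G.degWithin X u < #(L' u) * (d + 1) := fun u hu => by
    have hk : k ≤ #(L' u) + G.degWithin (A \ X) u :=
      ((hL u).trans card_le_card_sdiff_add_card).trans (Nat.add_le_add_left card_image_le _)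
    nlinarith [hlight u hu, Nat.mul_le_mul_right (d + 1) hk]
  obtain ⟨χ, hχL, hχd⟩ := G.exists_defective_listColoring_of_degWithin_lt hL'
  refine ⟨X.piecewise χ ψ, fun v hv => ?_, G.degWithin_monoSub_piecewise_le hχd hψd ?_⟩
  · by_cases hvX : v ∈ X
    · rw [piecewise_eq_of_mem _ _ _ hvX]
      exact (mem_sdiff.1 (hχL v hvX)).1
    · rw [piecewise_eq_of_notMem _ _ _ hvX]
      exact hψL v (mem_sdiff.2 ⟨hv, hvX⟩)
  · intro u hu w hw huw hc
    exact (mem_sdiff.1 (hχL u hu)).2 (mem_image.2 ⟨w, mem_filter.2 ⟨hw, huw⟩, hc.symm⟩)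

theorem defectLe_iff [Fintype V] {φ : V → ℕ} {d : ℕ} :
    G.DefectLe φ d ↔ ∀ v, (G.monoSub φ).degWithin univ v ≤ d := by
  refine forall_congr' fun v => ?_
  rw [degWithin, ← Set.ncard_coe_finset, coe_filter]
  simp only [mem_univ, true_and, monoSub, eq_comm]

theorem mul_sum_degWithin_lt_of_degPairs_lt {s : Finset V} {k d : ℕ}
    (h : (G.degPairs s : ℚ) < (2 * d + 2) / (d + 2) * k * #s) :
    (d + 2) * ∑ v ∈ s, G.degWithin s v < 2 * k * (d + 1) * #s := by
  rw [degPairs_eq_sum_degWithin, div_mul_eq_mul_div, div_mul_eq_mul_div,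
    lt_div_iff₀ (by positivity)] at h
  have : ((d + 2) * ∑ v ∈ s, G.degWithin s v : ℚ) < 2 * k * (d + 1) * #s := by linarith
  exact_mod_cast this

end SimpleGraph

theorem stmt3_general {V : Type*} [Fintype V] (G : SimpleGraph V) (k d : ℕ)
    (hmad : ∀ s : Finset V, s.Nonempty →
      (G.degPairs s : ℚ) < (2 * d + 2) / (d + 2) * k * s.card)
    (L : V → Finset ℕ) (hL : ∀ v, k ≤ (L v).card) :
    ∃ φ : V → ℕ, (∀ v, φ v ∈ L v) ∧ G.DefectLe φ d := by
  classical
  obtain ⟨φ, hφL, hφd⟩ := G.exists_defective_listColoring_of_sum_degWithin_lt hL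
    (fun s hs => G.mul_sum_degWithin_lt_of_degPairs_lt (hmad s hs)) univ
  exact ⟨φ, fun v => hφL v (mem_univ v), G.defectLe_iff.2 fun v => hφd v (mem_univ v)⟩

theorem stmt3 {V : Type*} [Fintype V] (G : SimpleGraph V) (k d : ℕ) (hk : 1 ≤ k)
    (hmad : ∀ s : Finset V, s.Nonempty →
      (G.degPairs s : ℚ) < (2 * d + 2) / (d + 2) * k * s.card)
    (L : V → Finset ℕ) (hL : ∀ v, k ≤ (L v).card) :
    ∃ φ : V → ℕ, (∀ v, φ v ∈ L v) ∧ G.DefectLe φ d :=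
  stmt3_general G k d hmad L hL
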